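/- The robust Bellman operator T defined by (Tv)_s = max_{π ∈ Δ_A} min_{P_s ∈ 𝒫_s} Σ_a π_a Σ_{s'} P_{s,a,s'}(r_{s,a,s'} + γ v_{s'}) is a γ-contraction on ℝ^S under the supremum norm, for any nonempty compact s-rectangular ambiguity sets 𝒫_s ⊆ (Δ_S)^A and γ ∈ (0,1). -/

import Mathlib

open Finset

lemma rbc_wsum_le {S A : Type*} [Fintype S] [Fintype A]
    (π : A → ℝ) (hπ0 : ∀ a, 0 ≤ π a) (hπ1 : ∑ a, π a = 1)
    (p : A → S → ℝ) (hp : ∀ a, (∀ s', 0 ≤ p a s') ∧ ∑ s', p a s' = 1)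
    (w : A → S → ℝ) (B : ℝ) (hw : ∀ a s', w a s' ≤ B) :
    ∑ a, π a * ∑ s', p a s' * w a s' ≤ B := by
  have inner : ∀ a, ∑ s', p a s' * w a s' ≤ B := fun a => by
    calc ∑ s', p a s' * w a s' ≤ ∑ s', p a s' * B :=
          Finset.sum_le_sum fun s' _ => mul_le_mul_of_nonneg_left (hw a s') ((hp a).1 s')
      _ = B := by rw [← Finset.sum_mul, (hp a).2, one_mul]
  calc ∑ a, π a * ∑ s', p a s' * w a s' ≤ ∑ a, π a * B :=
        Finset.sum_le_sum fun a _ => mul_le_mul_of_nonneg_left (inner a) (hπ0 a)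
    _ = B := by rw [← Finset.sum_mul, hπ1, one_mul]

lemma rbc_wsum_ge {S A : Type*} [Fintype S] [Fintype A]
    (π : A → ℝ) (hπ0 : ∀ a, 0 ≤ π a) (hπ1 : ∑ a, π a = 1)
    (p : A → S → ℝ) (hp : ∀ a, (∀ s', 0 ≤ p a s') ∧ ∑ s', p a s' = 1)
    (w : A → S → ℝ) (B : ℝ) (hw : ∀ a s', B ≤ w a s') :
    B ≤ ∑ a, π a * ∑ s', p a s' * w a s' := by
  have inner : ∀ a, B ≤ ∑ s', p a s' * w a s' := fun a => by
    calc B = ∑ s', p a s' * B := by rw [← Finset.sum_mul, (hp a).2, one_mul]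
      _ ≤ ∑ s', p a s' * w a s' :=
          Finset.sum_le_sum fun s' _ => mul_le_mul_of_nonneg_left (hw a s') ((hp a).1 s')
  calc B = ∑ a, π a * B := by rw [← Finset.sum_mul, hπ1, one_mul]
    _ ≤ ∑ a, π a * ∑ s', p a s' * w a s' :=
        Finset.sum_le_sum fun a _ => mul_le_mul_of_nonneg_left (inner a) (hπ0 a)

lemma rbc_key {S A : Type*} [Fintype S] [Fintype A]
    [Nonempty S] [Nonempty A]
    (r : S → A → S → ℝ) (γ : ℝ) (hγ0 : 0 < γ)
    (Pamb : S → Set (A → S → ℝ))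
    (hne : ∀ s, (Pamb s).Nonempty)
    (hsub : ∀ s, Pamb s ⊆ {p | ∀ a, (∀ s', 0 ≤ p a s') ∧ ∑ s', p a s' = 1})
    (u v : S → ℝ) (s : S) :
    (⨆ π : {π : A → ℝ // (∀ a, 0 ≤ π a) ∧ ∑ a, π a = 1},
      ⨅ p : Pamb s, ∑ a, π.1 a * ∑ s', p.1 a s' * (r s a s' + γ * u s'))
    ≤ (⨆ π : {π : A → ℝ // (∀ a, 0 ≤ π a) ∧ ∑ a, π a = 1},
      ⨅ p : Pamb s, ∑ a, π.1 a * ∑ s', p.1 a s' * (r s a s' + γ * v s'))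
      + γ * ⨆ t, |u t - v t| := by
  haveI hPi : Nonempty {π : A → ℝ // (∀ a, 0 ≤ π a) ∧ ∑ a, π a = 1} := by
    refine ⟨⟨fun _ => (Fintype.card A : ℝ)⁻¹, fun a => by positivity, ?_⟩⟩
    have h : (Fintype.card A : ℝ) ≠ 0 := by exact_mod_cast Fintype.card_ne_zero
    simp [Finset.sum_const, h]
  haveI hPs : Nonempty (Pamb s) := (hne s).to_subtype
  set M : ℝ := ⨆ t, |u t - v t| with hMdef
  have hM : ∀ t, |u t - v t| ≤ M := fun t => le_ciSup (f := fun t => |u t - v t|) (Finite.bddAbove_range _) t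
  obtain ⟨Bu, hBu⟩ := Finite.exists_le (fun q : A × S => |r s q.1 q.2 + γ * u q.2|)
  obtain ⟨Bv, hBv⟩ := Finite.exists_le (fun q : A × S => |r s q.1 q.2 + γ * v q.2|)
  have hbb : ∀ (w : S → ℝ) (B : ℝ), (∀ q : A × S, |r s q.1 q.2 + γ * w q.2| ≤ B) →
      ∀ π : {π : A → ℝ // (∀ a, 0 ≤ π a) ∧ ∑ a, π a = 1},
      BddBelow (Set.range fun p : Pamb s =>
        ∑ a, π.1 a * ∑ s', p.1 a s' * (r s a s' + γ * w s')) := by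
    intro w B hB π
    refine ⟨-B, ?_⟩
    rintro x ⟨p, rfl⟩
    refine rbc_wsum_ge π.1 π.2.1 π.2.2 p.1 (hsub s p.2) _ (-B) fun a s' => ?_
    have h1 := hB (a, s')
    have h2 := neg_abs_le (r s a s' + γ * w s')
    dsimp at h1
    linarith
  have step : ∀ π : {π : A → ℝ // (∀ a, 0 ≤ π a) ∧ ∑ a, π a = 1},
      (⨅ p : Pamb s, ∑ a, π.1 a * ∑ s', p.1 a s' * (r s a s' + γ * u s'))
      ≤ (⨅ p : Pamb s, ∑ a, π.1 a * ∑ s', p.1 a s' * (r s a s' + γ * v s')) + γ * M := by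
    intro π
    have h1 : ∀ p : Pamb s,
        (⨅ q : Pamb s, ∑ a, π.1 a * ∑ s', q.1 a s' * (r s a s' + γ * u s')) - γ * M
        ≤ ∑ a, π.1 a * ∑ s', p.1 a s' * (r s a s' + γ * v s') := by
      intro p
      have h2 : (⨅ q : Pamb s, ∑ a, π.1 a * ∑ s', q.1 a s' * (r s a s' + γ * u s'))
          ≤ ∑ a, π.1 a * ∑ s', p.1 a s' * (r s a s' + γ * u s') :=
        ciInf_le (hbb u Bu hBu π) p
      have hdiff : (∑ a, π.1 a * ∑ s', p.1 a s' * (r s a s' + γ * u s'))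
          - (∑ a, π.1 a * ∑ s', p.1 a s' * (r s a s' + γ * v s'))
          = ∑ a, π.1 a * ∑ s', p.1 a s' * (γ * (u s' - v s')) := by
        simp only [← Finset.sum_sub_distrib, ← mul_sub, add_sub_add_left_eq_sub]
      have h3 : ∑ a, π.1 a * ∑ s', p.1 a s' * (γ * (u s' - v s')) ≤ γ * M := by
        refine rbc_wsum_le π.1 π.2.1 π.2.2 p.1 (hsub s p.2) _ (γ * M) fun a s' => ?_
        exact mul_le_mul_of_nonneg_left (le_trans (le_abs_self _) (hM s')) hγ0.le
      linarith
    have h4 := le_ciInf h1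
    linarith
  have hba : BddAbove (Set.range fun π : {π : A → ℝ // (∀ a, 0 ≤ π a) ∧ ∑ a, π a = 1} =>
      ⨅ p : Pamb s, ∑ a, π.1 a * ∑ s', p.1 a s' * (r s a s' + γ * v s')) := by
    refine ⟨Bv, ?_⟩
    rintro x ⟨π, rfl⟩
    obtain ⟨p₀⟩ := hPs
    calc (⨅ p : Pamb s, ∑ a, π.1 a * ∑ s', p.1 a s' * (r s a s' + γ * v s'))
        ≤ ∑ a, π.1 a * ∑ s', p₀.1 a s' * (r s a s' + γ * v s') := ciInf_le (hbb v Bv hBv π) p₀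
      _ ≤ Bv := by
          refine rbc_wsum_le π.1 π.2.1 π.2.2 p₀.1 (hsub s p₀.2) _ Bv fun a s' => ?_
          exact le_trans (le_abs_self _) (hBv (a, s'))
  refine ciSup_le fun π => ?_
  calc (⨅ p : Pamb s, ∑ a, π.1 a * ∑ s', p.1 a s' * (r s a s' + γ * u s'))
      ≤ (⨅ p : Pamb s, ∑ a, π.1 a * ∑ s', p.1 a s' * (r s a s' + γ * v s')) + γ * M := step π
    _ ≤ (⨆ π : {π : A → ℝ // (∀ a, 0 ≤ π a) ∧ ∑ a, π a = 1},
        ⨅ p : Pamb s, ∑ a, π.1 a * ∑ s', p.1 a s' * (r s a s' + γ * v s')) + γ * M :=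
        add_le_add_left (le_ciSup hba π) _

open Finset in
/-- The robust Bellman operator `(Tv)_s = max_{π∈Δ_A} min_{P_s∈Pamb_s} Σ_a π_a Σ_{s'}
P_{s,a,s'}(r_{s,a,s'} + γ v_{s'})` is a `γ`-contraction in the supremum norm, for any
nonempty compact `s`-rectangular ambiguity sets `Pamb_s ⊆ (Δ_S)^A` and `γ ∈ (0,1)`. -/
theorem robust_bellman_contraction {S A : Type*} [Fintype S] [Fintype A]
    [Nonempty S] [Nonempty A]
    (r : S → A → S → ℝ) (γ : ℝ) (hγ0 : 0 < γ) (hγ1 : γ < 1)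
    (Pamb : S → Set (A → S → ℝ))
    (hne : ∀ s, (Pamb s).Nonempty) (hcomp : ∀ s, IsCompact (Pamb s))
    (hsub : ∀ s, Pamb s ⊆ {p | ∀ a, (∀ s', 0 ≤ p a s') ∧ ∑ s', p a s' = 1})
    (T : (S → ℝ) → (S → ℝ))
    (hT : ∀ v s, T v s = ⨆ π : {π : A → ℝ // (∀ a, 0 ≤ π a) ∧ ∑ a, π a = 1},
      ⨅ p : Pamb s, ∑ a, π.1 a * ∑ s', p.1 a s' * (r s a s' + γ * v s')) :
    ∀ u v : S → ℝ, (⨆ s, |T u s - T v s|) ≤ γ * ⨆ s, |u s - v s| := by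
  intro u v
  have hsym : (⨆ t, |v t - u t|) = ⨆ t, |u t - v t| :=
    congrArg iSup (funext fun t => abs_sub_comm _ _)
  refine ciSup_le fun s => ?_
  have h1 := rbc_key r γ hγ0 Pamb hne hsub u v s
  rw [← hT u s, ← hT v s] at h1
  have h2 := rbc_key r γ hγ0 Pamb hne hsub v u s
  rw [← hT v s, ← hT u s, hsym] at h2
  rw [abs_sub_le_iff]
  constructor <;> linarith
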